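/- Let H be a complex Hilbert space and let Φ : B(H) → B(H) be a unital completely positive linear map. Then the set of fixed points Fix(Φ) = {A ∈ B(H) : Φ(A) = A} is closed under multiplication if and only if for every A ∈ B(H) with Φ(A) = A one also has Φ(A*A) = A*A and Φ(AA*) = AA*. -/

import Mathlib

open scoped Matrix

/-- A map between star rings is *completely positive* if, for every `n`, applying it
entrywise to `n × n` matrices sends positive elements (i.e. those of the form `Nᴴ * N`)
of the matrix ring over the domain to positive elements of the matrix ring over the
codomain. -/
def CompletelyPositive {A B : Type*} [NonUnitalNonAssocSemiring A] [StarRing A]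
    [NonUnitalNonAssocSemiring B] [StarRing B] (Φ : A → B) : Prop :=
  ∀ n : ℕ, ∀ M : Matrix (Fin n) (Fin n) A,
    (∃ N : Matrix (Fin n) (Fin n) A, M = Nᴴ * N) →
      ∃ P : Matrix (Fin n) (Fin n) B, M.map Φ = Pᴴ * P

/-!
Complete positivity gives, for every finite family `yᵢ`, an operator matrix `[Φ (yᵢ* yⱼ)]` of
the form `Qᴴ Q`, whose quadratic form is a sum of squares. A self-adjoint `s` is a difference
of squares, `4 s = (s + 1)* (s + 1) - (s - 1)* (s - 1)`, so `Φ` commutes with the adjoint;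
hence the adjoint of a fixed point is fixed, which gives the forward direction.

Conversely, if `Φ (a a*) = Φ a (Φ a)*`, the form for `y = (1, a*, b)` at
`w = (-((Φ a)* u + Φ b v), u, v)` equals `2 Re ⟪u, (Φ (a b) - Φ a Φ b) v⟫ + c_v` with `c_v`
independent of `u`. Its nonnegativity for all `u` forces `Φ (a b) = Φ a Φ b` (Choi's
multiplicative domain). For a fixed point `a` with `a a*` fixed this reads `Φ (a b) = a b` for
every fixed `b`.
-/

open ComplexStarModule RCLike
open scoped InnerProductSpace

theorem eq_zero_of_forall_re_inner_add_nonneg {𝕜 E : Type*} [RCLike 𝕜] [NormedAddCommGroup E]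
    [InnerProductSpace 𝕜 E] {e : E} {r : ℝ} (h : ∀ u : E, 0 ≤ re ⟪u, e⟫_𝕜 + r) : e = 0 := by
  by_contra he
  have hpos : 0 < ‖e‖ ^ 2 := by positivity
  have h' := h (((-(r + 1) / ‖e‖ ^ 2 : ℝ) : 𝕜) • e)
  rw [inner_smul_left, conj_ofReal, re_ofReal_mul, inner_self_eq_norm_sq,
    div_mul_cancel₀ _ hpos.ne'] at h'
  linarith

theorem Matrix.re_sum_inner_conjTranspose_mul_self_apply_nonneg {ι K : Type*} [Fintype ι]
    [NormedAddCommGroup K] [InnerProductSpace ℂ K] [CompleteSpace K]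
    (Q : Matrix ι ι (K →L[ℂ] K)) (w : ι → K) :
    0 ≤ re (∑ i, ∑ j, ⟪w i, (Qᴴ * Q) i j (w j)⟫_ℂ) := by
  have hsum : ∑ i, ∑ j, ⟪w i, (Qᴴ * Q) i j (w j)⟫_ℂ =
      ∑ k, ⟪∑ i, Q k i (w i), ∑ j, Q k j (w j)⟫_ℂ := by
    simp_rw [Matrix.mul_apply, Matrix.conjTranspose_apply, _root_.sum_apply,
      mul_apply_eq_comp, inner_sum, sum_inner, ContinuousLinearMap.star_eq_adjoint,
      ContinuousLinearMap.adjoint_inner_right]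
    rw [Finset.sum_comm_cycle]
    exact Finset.sum_congr rfl fun k _ => Finset.sum_comm
  rw [hsum, map_sum]
  exact Finset.sum_nonneg fun k _ => by rw [inner_self_eq_norm_sq]; positivity

namespace CompletelyPositive

section Semiring

variable {A B : Type*} [NonUnitalNonAssocSemiring A] [StarRing A]
    [NonUnitalNonAssocSemiring B] [StarRing B] {Φ : A → B}

theorem exists_map_star_mul_eq_conjTranspose_mul_self (hcp : CompletelyPositive Φ) {n : ℕ}
    (y : Fin n → A) :
    ∃ Q : Matrix (Fin n) (Fin n) B, ∀ i j, Φ (star (y i) * y j) = (Qᴴ * Q) i j := by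
  cases n with
  | zero => exact ⟨0, fun i => i.elim0⟩
  | succ n =>
    obtain ⟨Q, hQ⟩ := hcp (n + 1) (Matrix.of fun i j => star (y i) * y j)
      ⟨Matrix.of fun k j => if k = 0 then y j else 0, by
        ext i j
        simp [Matrix.mul_apply, Matrix.conjTranspose_apply]⟩
    exact ⟨Q, fun i j => congrFun₂ hQ i j⟩

theorem isSelfAdjoint_map_star_mul_self (hcp : CompletelyPositive Φ) (z : A) :
    IsSelfAdjoint (Φ (star z * z)) := by
  obtain ⟨Q, hQ⟩ := hcp.exists_map_star_mul_eq_conjTranspose_mul_self ![z]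
  rw [show Φ (star z * z) = (Qᴴ * Q) 0 0 from hQ 0 0]
  simp [Matrix.mul_apply, IsSelfAdjoint.star_mul_self (Q 0 0)]

end Semiring

section Algebra

variable {A B : Type*} [Ring A] [StarRing A] [Module ℂ A]
    [Ring B] [StarRing B] [Module ℂ B] [StarModule ℂ B] {Φ : A →ₗ[ℂ] B}

theorem isSelfAdjoint_map (hcp : CompletelyPositive ⇑Φ) {s : A} (hs : IsSelfAdjoint s) :
    IsSelfAdjoint (Φ s) := by
  have hpol : s = (4 : ℂ)⁻¹ • (star (s + 1) * (s + 1) - star (s - 1) * (s - 1)) := by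
    rw [star_add, star_sub, hs.star_eq, star_one, eq_inv_smul_iff₀ (by norm_num)]
    simp only [add_mul, mul_add, sub_mul, mul_sub, mul_one, one_mul]
    module
  rw [hpol, map_smul, map_sub]
  refine IsSelfAdjoint.smul ?_ ((hcp.isSelfAdjoint_map_star_mul_self _).sub
    (hcp.isSelfAdjoint_map_star_mul_self _))
  simp [IsSelfAdjoint]

theorem map_star [StarModule ℂ A] (hcp : CompletelyPositive ⇑Φ) (x : A) :
    Φ (star x) = star (Φ x) := by
  have hre := hcp.isSelfAdjoint_map (ℜ x).2
  have him := hcp.isSelfAdjoint_map (ℑ x).2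
  rw [← realPart_add_I_smul_imaginaryPart x]
  simp only [star_add, star_smul, map_add, map_smul, (ℜ x).2.star_eq, (ℑ x).2.star_eq,
    hre.star_eq, him.star_eq, Complex.star_def, Complex.conj_I, neg_smul, map_neg]

end Algebra

variable {K : Type*} [NormedAddCommGroup K] [InnerProductSpace ℂ K] [CompleteSpace K]

theorem re_sum_inner_map_star_mul_nonneg {A : Type*} [NonUnitalNonAssocSemiring A] [StarRing A]
    {Φ : A → (K →L[ℂ] K)} (hcp : CompletelyPositive Φ) {n : ℕ} (y : Fin n → A) (w : Fin n → K) :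
    0 ≤ re (∑ i, ∑ j, ⟪w i, Φ (star (y i) * y j) (w j)⟫_ℂ) := by
  obtain ⟨Q, hQ⟩ := hcp.exists_map_star_mul_eq_conjTranspose_mul_self y
  simpa only [hQ] using Q.re_sum_inner_conjTranspose_mul_self_apply_nonneg w

variable {A : Type*} [Ring A] [StarRing A] [Module ℂ A] [StarModule ℂ A]
    {Φ : A →ₗ[ℂ] (K →L[ℂ] K)}

theorem two_mul_re_inner_map_mul_sub_add_nonneg (hcp : CompletelyPositive ⇑Φ)
    (hunital : Φ 1 = 1) {a : A} (ha : Φ (a * star a) = Φ a * star (Φ a)) (b : A) (u v : K) :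
    0 ≤ 2 * re ⟪u, (Φ (a * b) - Φ a * Φ b) v⟫_ℂ +
      (re ⟪v, Φ (star b * b) v⟫_ℂ - ‖Φ b v‖ ^ 2) := by
  have h := hcp.re_sum_inner_map_star_mul_nonneg ![1, star a, b]
    ![-(star (Φ a) u + Φ b v), u, v]
  have hba : Φ (star b * star a) = star (Φ (a * b)) := by rw [← star_mul, hcp.map_star]
  simp only [Fin.sum_univ_three, Matrix.cons_val_zero, Matrix.cons_val_one, Matrix.cons_val_two,
    Matrix.head_cons, Matrix.tail_cons, star_one, star_star, one_mul, mul_one, hunital, ha, hba,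
    hcp.map_star] at h
  simp only [mul_apply_eq_comp, one_apply_eq_self, sub_apply, map_sub, inner_self_eq_norm_sq,
    map_add, map_neg, inner_add_left, inner_add_right, inner_neg_left, inner_neg_right,
    inner_sub_right, ContinuousLinearMap.star_eq_adjoint, ContinuousLinearMap.adjoint_inner_left,
    ContinuousLinearMap.adjoint_inner_right] at h ⊢
  rw [inner_re_symm (Φ (a * b) v), inner_re_symm (Φ a (Φ b v))] at h
  linarith

theorem map_mul_of_map_mul_star_self (hcp : CompletelyPositive ⇑Φ) (hunital : Φ 1 = 1) {a : A}
    (ha : Φ (a * star a) = Φ a * star (Φ a)) (b : A) : Φ (a * b) = Φ a * Φ b := by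
  ext v
  rw [← sub_eq_zero, ← sub_apply]
  exact eq_zero_of_forall_re_inner_add_nonneg (𝕜 := ℂ)
    (r := (re ⟪v, Φ (star b * b) v⟫_ℂ - ‖Φ b v‖ ^ 2) / 2) fun u => by
    linarith [hcp.two_mul_re_inner_map_mul_sub_add_nonneg hunital ha b u v]

end CompletelyPositive

/-- **Theorem 5.5.(b).** For a unital completely positive map `Φ : B(H) → B(H)`, the set
of fixed points of `Φ` is closed under multiplication if and only if every fixed point
`A` of `Φ` also has `A*A` and `AA*` fixed by `Φ`. -/
theorem fixedPoints_mul_closed_iff_second_order {H : Type*}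
    [NormedAddCommGroup H] [InnerProductSpace ℂ H] [CompleteSpace H]
    (Φ : (H →L[ℂ] H) →ₗ[ℂ] (H →L[ℂ] H)) (hunital : Φ 1 = 1)
    (hcp : CompletelyPositive (⇑Φ)) :
    (∀ A B : H →L[ℂ] H, Φ A = A → Φ B = B → Φ (A * B) = A * B) ↔
      ∀ A : H →L[ℂ] H, Φ A = A →
        Φ (star A * A) = star A * A ∧ Φ (A * star A) = A * star A := by
  have map_star_of_fixed {A : H →L[ℂ] H} (hA : Φ A = A) : Φ (star A) = star A := by
    rw [hcp.map_star, hA]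
  constructor
  · intro hmul A hA
    exact ⟨hmul _ _ (map_star_of_fixed hA) hA, hmul _ _ hA (map_star_of_fixed hA)⟩
  · intro hsq A B hA hB
    have hdomain : Φ (A * star A) = Φ A * star (Φ A) := by rw [(hsq A hA).2, hA]
    rw [hcp.map_mul_of_map_mul_star_self hunital hdomain, hA, hB]
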